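/- arXiv:2507.18535 — 8 statements merged into one kernel-verified Lean document; each statement's English description precedes it below -/
import Mathlib

section
/- For the path graph P_n with n ≥ 4, the 2-domination number equals n/2 + 1 if n is even, and (n-1)/2 + 1 if n is odd. -/
open SimpleGraph

/-- `D` is a 2-dominating set of `G`: every vertex outside `D` has at least
two neighbors in `D`. -/
def IsTwoDomSet {V : Type*} (G : SimpleGraph V) (D : Set V) : Prop :=
  ∀ v ∉ D, 2 ≤ (G.neighborSet v ∩ D).ncard

/-- The 2-domination number `γ₂(G)`. -/
noncomputable def gamma2 {V : Type*} (G : SimpleGraph V) : ℕ :=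
  sInf {k | ∃ D : Set V, IsTwoDomSet G D ∧ D.ncard = k}

/-- The 2-domination stability `st_{γ₂}(G)`: the minimum number of vertices
whose removal changes the 2-domination number. -/
noncomputable def stGamma2 {V : Type*} (G : SimpleGraph V) : ℕ :=
  sInf {k | ∃ S : Set V, S.ncard = k ∧ gamma2 (G.induce Sᶜ) ≠ gamma2 G}

/-!
A vertex of a path has at most two neighbours, so a vertex outside a 2-dominating set `D` of `P_n`
is an inner vertex whose predecessor and successor both lie in `D`. Hence the first vertex is in
`D` and `v ↦ v + 1` injects the complement of `D` into `D ∖ {0}`, which gives `n < 2 |D|`, i.e.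
`|D| ≥ n / 2 + 1`. The even vertices together with the last one form a 2-dominating set of that
size.
-/

lemma isTwoDomSet_univ {V : Type*} (G : SimpleGraph V) : IsTwoDomSet G Set.univ :=
  fun _ hv => absurd (Set.mem_univ _) hv

lemma gamma2_le_ncard {V : Type*} {G : SimpleGraph V} {D : Set V} (hD : IsTwoDomSet G D) :
    gamma2 G ≤ D.ncard :=
  Nat.sInf_le ⟨D, hD, rfl⟩

lemma exists_isTwoDomSet_ncard_eq_gamma2 {V : Type*} (G : SimpleGraph V) :
    ∃ D : Set V, IsTwoDomSet G D ∧ D.ncard = gamma2 G :=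
  Nat.sInf_mem (s := {k | ∃ D : Set V, IsTwoDomSet G D ∧ D.ncard = k})
    ⟨_, Set.univ, isTwoDomSet_univ G, rfl⟩

lemma isTwoDomSet_pathGraph_iff {n : ℕ} {D : Set (Fin n)} :
    IsTwoDomSet (pathGraph n) D ↔
      ∀ v ∉ D, ∃ u ∈ D, ∃ w ∈ D, u.val + 1 = v.val ∧ v.val + 1 = w.val := by
  refine forall₂_congr fun v _ => ?_
  change 1 < _ ↔ _
  rw [Set.one_lt_ncard]
  simp only [Set.mem_inter_iff, mem_neighborSet, pathGraph_adj]
  constructor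
  · rintro ⟨a, ⟨ha, haD⟩, b, ⟨hb, hbD⟩, hab⟩
    have hval : a.val ≠ b.val := Fin.val_ne_of_ne hab
    rcases ha with ha | ha <;> rcases hb with hb | hb
    · omega
    · exact ⟨b, hbD, a, haD, hb, ha⟩
    · exact ⟨a, haD, b, hbD, ha, hb⟩
    · omega
  · rintro ⟨u, huD, w, hwD, hu, hw⟩
    exact ⟨u, ⟨Or.inr hu, huD⟩, w, ⟨Or.inl hw, hwD⟩, fun h => by omega⟩

lemma IsTwoDomSet.pathGraph_lt_two_mul_ncard {n : ℕ} (hn : 0 < n) {D : Set (Fin n)}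
    (hD : IsTwoDomSet (pathGraph n) D) : n < 2 * D.ncard := by
  rw [isTwoDomSet_pathGraph_iff] at hD
  have hzero : (⟨0, hn⟩ : Fin n) ∈ D := by
    by_contra h
    obtain ⟨u, -, -, -, hu, -⟩ := hD _ h
    exact Nat.succ_ne_zero _ hu
  have hcompl : Dᶜ.ncard ≤ (Fin.val '' D \ {0}).ncard := by
    refine Set.ncard_le_ncard_of_injOn (fun v : Fin n => v.val + 1) ?_ ?_
    · intro v hv
      obtain ⟨-, -, w, hwD, -, hw⟩ := hD v hv
      exact Set.mem_sdiff_singleton.mpr ⟨⟨w, hwD, hw.symm⟩, Nat.succ_ne_zero _⟩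
    · intro v _ w _ h
      exact Fin.ext (Nat.succ_injective h)
  rw [Set.ncard_sdiff_singleton_of_mem (Set.mem_image_of_mem _ hzero),
    Set.ncard_image_of_injective _ Fin.val_injective] at hcompl
  have hsum := Set.ncard_add_ncard_compl D
  rw [Nat.card_fin] at hsum
  have hpos : 0 < D.ncard := (Set.ncard_pos).mpr ⟨_, hzero⟩
  omega

def pathTwoDomSet (n : ℕ) : Set (Fin n) :=
  {v | Even v.val ∨ v.val + 1 = n}

lemma isTwoDomSet_pathTwoDomSet (n : ℕ) : IsTwoDomSet (pathGraph n) (pathTwoDomSet n) := by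
  rw [isTwoDomSet_pathGraph_iff]
  intro v hv
  simp only [pathTwoDomSet, Set.mem_ofPred_eq, not_or, Nat.not_even_iff_odd] at hv
  obtain ⟨⟨k, hk⟩, hlast⟩ := hv
  have hlt := v.isLt
  refine ⟨⟨2 * k, by omega⟩, Or.inl (even_two_mul k), ⟨2 * k + 2, by omega⟩, Or.inl ?_, ?_, ?_⟩
  · exact ⟨k + 1, by ring⟩
  all_goals simp only; omega

lemma ncard_pathTwoDomSet_le (n : ℕ) : (pathTwoDomSet n).ncard ≤ n / 2 + 1 := by
  have h := Set.ncard_le_ncard_of_injOn (s := pathTwoDomSet n)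
    (t := ↑(Finset.range (n / 2 + 1))) (fun v : Fin n => (v.val + 1) / 2) ?_ ?_
  · rwa [Set.ncard_coe_finset, Finset.card_range] at h
  · intro v _
    simp only [Finset.coe_range, Set.mem_Iio]
    omega
  · intro v hv w hw h
    simp only [pathTwoDomSet, Set.mem_ofPred_eq, Nat.even_iff] at hv hw h
    apply Fin.ext
    omega

theorem gamma2_pathGraph (n : ℕ) (hn : 4 ≤ n) :
    gamma2 (SimpleGraph.pathGraph n) =
      if Even n then n / 2 + 1 else (n - 1) / 2 + 1 := by
  have hupper : gamma2 (pathGraph n) ≤ n / 2 + 1 :=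
    (gamma2_le_ncard (isTwoDomSet_pathTwoDomSet n)).trans (ncard_pathTwoDomSet_le n)
  obtain ⟨D, hD, hcard⟩ := exists_isTwoDomSet_ncard_eq_gamma2 (pathGraph n)
  have hlower := hD.pathGraph_lt_two_mul_ncard (by omega)
  split_ifs with h
  · omega
  · obtain ⟨k, rfl⟩ := Nat.not_even_iff_odd.mp h
    omega
end

section
/- For the cycle graph C_n with n ≥ 4, the 2-domination number equals n/2 if n is even, and (n+1)/2 if n is odd. -/
open SimpleGraph

private lemma card_even_range (n : ℕ) :
    ((Finset.range n).filter (fun i => i % 2 = 0)).card = (n + 1) / 2 := by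
  induction n with
  | zero => simp
  | succ n ih =>
    rw [Finset.range_add_one, Finset.filter_insert]
    split_ifs with h
    · rw [Finset.card_insert_of_notMem (by simp)]
      omega
    · omega

private lemma val_add_one_even (m : ℕ) (v : Fin (m + 4)) (hv : v.val % 2 = 1) :
    ((v + 1 : Fin (m + 4))).val % 2 = 0 := by
  have hlt := v.isLt
  simp only [Fin.add_def, Fin.val_one]
  by_cases h3 : v.val + 1 < m + 4
  · rw [Nat.mod_eq_of_lt h3]; omega
  · rw [show v.val + 1 = m + 4 by omega, Nat.mod_self]

private lemma val_sub_one (m : ℕ) (v : Fin (m + 4)) (hv : 1 ≤ v.val) :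
    ((v - 1 : Fin (m + 4))).val = v.val - 1 := by
  have hlt := v.isLt
  simp only [Fin.sub_def, Fin.val_one]
  rw [show m + 4 - 1 + v.val = (v.val - 1) + 1 * (m + 4) by omega,
    Nat.add_mul_mod_self_right, Nat.mod_eq_of_lt (by omega)]

private lemma sub_ne_add (m : ℕ) (v : Fin (m + 4)) : v - 1 ≠ v + 1 := by
  intro h
  have h3 : v = v + (1 + 1) := by rw [← add_assoc]; exact sub_eq_iff_eq_add.mp h
  have h2 : (1 + 1 : Fin (m + 4)) = 0 := left_eq_add.mp h3
  have := congrArg Fin.val h2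
  simp only [Fin.add_def, Fin.val_one, Fin.val_zero] at this
  rw [Nat.mod_eq_of_lt (by omega)] at this
  omega

theorem gamma2_cycleGraph (n : ℕ) (hn : 4 ≤ n) :
    gamma2 (SimpleGraph.cycleGraph n) =
      if Even n then n / 2 else (n + 1) / 2 := by
  obtain ⟨m, rfl⟩ : ∃ m, n = m + 4 := ⟨n - 4, by omega⟩
  have hgoal : (if Even (m + 4) then (m + 4) / 2 else (m + 4 + 1) / 2)
      = (m + 4 + 1) / 2 := by
    split_ifs with h
    · rw [Nat.even_iff] at h; omega
    · rfl
  rw [hgoal]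
  have hnb : ∀ v : Fin (m + 4),
      (SimpleGraph.cycleGraph (m + 4)).neighborSet v = {v - 1, v + 1} :=
    fun v => cycleGraph_neighborSet (n := m + 2)
  set D : Set (Fin (m + 4)) := {i | i.val % 2 = 0} with hDdef
  have hDdom : IsTwoDomSet (SimpleGraph.cycleGraph (m + 4)) D := by
    intro v hv
    have hv0 : ¬ v.val % 2 = 0 := hv
    have hv1 : v.val % 2 = 1 := by omega
    have h1 : (v + 1) ∈ D := val_add_one_even m v hv1
    have h2 : (v - 1) ∈ D := by
      show (v - 1).val % 2 = 0
      rw [val_sub_one m v (by omega)]; omega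
    rw [hnb v, Set.inter_eq_left.mpr ?_, Set.ncard_pair (sub_ne_add m v)]
    intro x hx
    simp only [Set.mem_insert_iff, Set.mem_singleton_iff] at hx
    rcases hx with rfl | rfl
    exacts [h2, h1]
  have hDcard : D.ncard = (m + 4 + 1) / 2 := by
    rw [hDdef, Set.ncard_eq_toFinset_card', Set.toFinset_setOf,
      Finset.card_filter,
      Fin.sum_univ_eq_sum_range (fun i => if i % 2 = 0 then 1 else 0),
      ← Finset.card_filter, card_even_range]
  unfold gamma2
  apply le_antisymm
  · exact Nat.sInf_le ⟨D, hDdom, hDcard⟩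
  · apply le_csInf
    · exact ⟨(m + 4 + 1) / 2, D, hDdom, hDcard⟩
    rintro k ⟨E, hEdom, rfl⟩
    have hstep : ∀ v : Fin (m + 4), v ∉ E → v + 1 ∈ E := by
      intro v hv
      have h2 := hEdom v hv
      rw [hnb v] at h2
      have hpair : ({v - 1, v + 1} : Set (Fin (m + 4))).ncard ≤ 2 := by
        apply le_trans (Set.ncard_insert_le _ _)
        simp
      have heq : ({v - 1, v + 1} : Set (Fin (m + 4))) ∩ E
          = ({v - 1, v + 1} : Set (Fin (m + 4))) :=
        Set.eq_of_subset_of_ncard_le Set.inter_subset_left (by omega)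
          (Set.toFinite _)
      have hmem : v + 1 ∈ ({v - 1, v + 1} : Set (Fin (m + 4))) := by simp
      rw [← heq] at hmem
      exact hmem.2
    have hinj : Set.InjOn (fun v => v + 1) Eᶜ :=
      fun a _ b _ h => add_left_injective 1 h
    have himg : (fun v => v + 1) '' Eᶜ ⊆ E := by
      rintro _ ⟨v, hv, rfl⟩; exact hstep v hv
    have h1 : Eᶜ.ncard ≤ E.ncard := by
      calc Eᶜ.ncard = ((fun v => v + 1) '' Eᶜ).ncard :=
            (Set.ncard_image_of_injOn hinj).symm
        _ ≤ E.ncard := Set.ncard_le_ncard himg (Set.toFinite E)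
    have h2 : E.ncard + Eᶜ.ncard = m + 4 := by
      rw [Set.ncard_add_ncard_compl]; simp
    omega
end

section
/- For n ≥ 1, the 2-domination number of the friendship graph F_n equals n + 1. -/
open SimpleGraph

/-- The friendship graph `F_n`: `n` triangles sharing the central vertex `none`. -/
def friendshipGraph (n : ℕ) : SimpleGraph (Option (Fin n × Fin 2)) :=
  SimpleGraph.fromRel (fun x y =>
    match x, y with
    | none, _ => True
    | some (i, _), some (j, _) => i = j
    | _, none => False)

lemma fg_nbr (n : ℕ) (i : Fin n) (a : Fin 2) :
    (friendshipGraph n).neighborSet (some (i,a)) = {none, some (i, 1-a)} := by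
  ext v
  simp only [neighborSet, friendshipGraph, fromRel_adj, Set.mem_setOf_eq,
    Set.mem_insert_iff, Set.mem_singleton_iff]
  constructor
  · rintro ⟨hne, h⟩
    match v with
    | none => left; rfl
    | some (j,b) =>
      right
      obtain h | h := h <;> subst h <;>
      · have hb : b ≠ a := fun h => hne (by rw [h])
        congr 1
        ext
        · rfl
        · fin_cases a <;> fin_cases b <;> simp_all
  · rintro (rfl|rfl)
    · exact ⟨by simp, Or.inr trivial⟩
    · refine ⟨?_, Or.inl rfl⟩
      simp only [ne_eq, Option.some.injEq, Prod.mk.injEq, true_and]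
      fin_cases a <;> simp

theorem gamma2_friendship (n : ℕ) (hn : 1 ≤ n) :
    gamma2 (friendshipGraph n) = n + 1 := by
  set G := friendshipGraph n
  -- the witness set
  set D : Set (Option (Fin n × Fin 2)) :=
    insert none (Set.range fun i : Fin n => some (i, (0 : Fin 2))) with hD
  have hinj : Function.Injective (fun i : Fin n => (some (i, (0 : Fin 2)) : Option (Fin n × Fin 2))) := by
    intro a b h; simpa using h
  have hcard : D.ncard = n + 1 := by
    rw [hD, Set.ncard_insert_of_notMem (by simp), ← Set.image_univ,
      Set.ncard_image_of_injective _ hinj, Set.ncard_univ]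
    simp
  have hdom : IsTwoDomSet G D := by
    intro v hv
    match v with
    | none => exact absurd (Set.mem_insert _ _) hv
    | some (i, a) =>
      have ha : a = 1 := by
        fin_cases a
        · exact absurd (show some (i,(0:Fin 2)) ∈ D from Set.mem_insert_of_mem _ ⟨i, rfl⟩) hv
        · rfl
      subst ha
      have hsub : ({none, some (i, (0 : Fin 2))} : Set (Option (Fin n × Fin 2)))
          ⊆ G.neighborSet (some (i, 1)) ∩ D := by
        rintro x (rfl | rfl)
        · exact ⟨by rw [fg_nbr]; exact Set.mem_insert _ _, Set.mem_insert _ _⟩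
        · refine ⟨by rw [fg_nbr]; right; simp, Set.mem_insert_of_mem _ ⟨i, rfl⟩⟩
      calc 2 = ({none, some (i, (0 : Fin 2))} : Set (Option (Fin n × Fin 2))).ncard := by
              rw [Set.ncard_pair (by simp)]
        _ ≤ _ := Set.ncard_le_ncard hsub (Set.toFinite _)
  have hmem : n + 1 ∈ {k | ∃ D : Set (Option (Fin n × Fin 2)), IsTwoDomSet G D ∧ D.ncard = k} :=
    ⟨D, hdom, hcard⟩
  apply le_antisymm (Nat.sInf_le hmem)
  apply le_csInf ⟨_, hmem⟩
  rintro k ⟨E, hE, rfl⟩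
  -- lower bound
  -- each triangle contains a vertex of E
  have htri : ∀ i : Fin n, some (i, (0:Fin 2)) ∈ E ∨ some (i, (1:Fin 2)) ∈ E := by
    intro i
    by_contra h
    push_neg at h
    obtain ⟨h0, h1⟩ := h
    have := hE _ h0
    have hsub : G.neighborSet (some (i, 0)) ∩ E ⊆ {none} := by
      rintro x ⟨hx, hxE⟩
      rw [fg_nbr] at hx
      rcases hx with rfl | rfl
      · rfl
      · exact absurd hxE (by simpa using h1)
    have := (Set.ncard_le_ncard hsub (Set.toFinite _)).trans_eq (Set.ncard_singleton _)
    omega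
  by_cases hnone : none ∈ E
  · -- E contains none and one vertex per triangle
    have hex : ∀ i : Fin n, ∃ a : Fin 2, some (i, a) ∈ E := fun i =>
      (htri i).elim (fun h => ⟨0, h⟩) (fun h => ⟨1, h⟩)
    choose f hf using hex
    set g : Fin n → Option (Fin n × Fin 2) := fun i => some (i, f i) with hg
    have hsub : insert none (Set.range g) ⊆ E := by
      rintro x (rfl | ⟨i, rfl⟩)
      · exact hnone
      · exact hf i
    have hginj : Function.Injective g := by
      intro a b hab
      have h2 : (a, f a) = (b, f b) := Option.some_injective _ hab
      exact (Prod.ext_iff.mp h2).1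
    calc n + 1 = (insert none (Set.range g)).ncard := by
          rw [Set.ncard_insert_of_notMem (by rintro ⟨i, hi⟩; simp [hg] at hi),
            ← Set.image_univ, Set.ncard_image_of_injective _ hginj, Set.ncard_univ]
          simp
      _ ≤ E.ncard := Set.ncard_le_ncard hsub (Set.toFinite _)
  · -- none ∉ E : all triangle vertices are in E
    have hall : ∀ i : Fin n, ∀ a : Fin 2, some (i, a) ∈ E := by
      intro i a
      by_contra h
      have := hE _ h
      have hsub : G.neighborSet (some (i, a)) ∩ E ⊆ {some (i, 1 - a)} := by
        rintro x ⟨hx, hxE⟩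
        rw [fg_nbr] at hx
        rcases hx with rfl | rfl
        · exact absurd hxE hnone
        · rfl
      have := (Set.ncard_le_ncard hsub (Set.toFinite _)).trans_eq (Set.ncard_singleton _)
      omega
    have hsub : Set.range (fun p : Fin n × Fin 2 => (some p : Option (Fin n × Fin 2))) ⊆ E := by
      rintro x ⟨⟨i, a⟩, rfl⟩
      exact hall i a
    have h2n : 2 * n ≤ E.ncard := by
      calc 2 * n = (Set.range (fun p : Fin n × Fin 2 => (some p : Option (Fin n × Fin 2)))).ncard := by
            rw [← Set.image_univ, Set.ncard_image_of_injective _ (Option.some_injective _),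
              Set.ncard_univ]
            simp [Nat.card_eq_fintype_card, mul_comm]
        _ ≤ E.ncard := Set.ncard_le_ncard hsub (Set.toFinite _)
    omega
end

section
/- For n ≥ 2, the 2-domination number of the book graph B_n = K_{1,n} □ P_2 equals n + 1. -/
open SimpleGraph

/-- The book graph `B_n = K_{1,n} □ P_2`. -/
def bookGraph (n : ℕ) : SimpleGraph ((Fin 1 ⊕ Fin n) × Fin 2) :=
  (completeBipartiteGraph (Fin 1) (Fin n)).boxProd (SimpleGraph.pathGraph 2)

/-- Neighbors of an outer (page) vertex. -/
lemma bookGraph_outer_nbr {n : ℕ} (i : Fin n) (j : Fin 2) {w}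
    (h : (bookGraph n).Adj (Sum.inr i, j) w) :
    w = (Sum.inl 0, j) ∨ w = (Sum.inr i, 1 - j) := by
  obtain ⟨a|a, k⟩ := w <;>
    simp only [bookGraph, boxProd_adj, pathGraph_adj, completeBipartiteGraph_adj] at h <;>
    fin_cases j <;> fin_cases k <;> simp_all <;> omega

lemma bookGraph_adj_hub {n : ℕ} (i : Fin n) (j : Fin 2) :
    (bookGraph n).Adj (Sum.inr i, j) (Sum.inl 0, j) := by
  simp [bookGraph, boxProd_adj]

lemma bookGraph_adj_page {n : ℕ} (i : Fin n) :
    (bookGraph n).Adj (Sum.inr i, 0) (Sum.inr i, 1) := by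
  simp [bookGraph, boxProd_adj, pathGraph_adj]

lemma bookGraph_adj_spine {n : ℕ} :
    (bookGraph n).Adj (Sum.inl 0, 0) (Sum.inl 0, 1) := by
  simp [bookGraph, boxProd_adj, pathGraph_adj]

theorem gamma2_bookGraph (n : ℕ) (hn : 2 ≤ n) :
    gamma2 (bookGraph n) = n + 1 := by
  set V := (Fin 1 ⊕ Fin n) × Fin 2
  -- the explicit 2-dominating set of size n+1
  set D0 : Set V := insert (Sum.inl 0, 0) (Set.range fun i : Fin n => (Sum.inr i, 1)) with hD0
  have hinj : Function.Injective fun i : Fin n => ((Sum.inr i : Fin 1 ⊕ Fin n), (1 : Fin 2)) := by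
    intro a b h; simpa using h
  have hD0card : D0.ncard = n + 1 := by
    rw [hD0, Set.ncard_insert_of_notMem (by rintro ⟨x, hx⟩; exact Sum.inr_ne_inl (congrArg Prod.fst hx)), ← Set.image_univ,
      Set.ncard_image_of_injective _ hinj, Set.ncard_univ, Nat.card_eq_fintype_card,
      Fintype.card_fin]
  have hD0dom : IsTwoDomSet (bookGraph n) D0 := by
    rintro ⟨a | a, j⟩ hv
    · have ha : a = 0 := Subsingleton.elim _ _
      subst ha
      fin_cases j
      · exact absurd (by simp [hD0]) hv
      · show 2 ≤ ((bookGraph n).neighborSet (Sum.inl 0, 1) ∩ D0).ncard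
        have h1 : ((Sum.inl 0 : Fin 1 ⊕ Fin n), (0 : Fin 2)) ∈
            (bookGraph n).neighborSet (Sum.inl 0, 1) ∩ D0 :=
          ⟨bookGraph_adj_spine.symm, by simp [hD0]⟩
        have h2 : ((Sum.inr (⟨0, by omega⟩ : Fin n) : Fin 1 ⊕ Fin n), (1 : Fin 2)) ∈
            (bookGraph n).neighborSet (Sum.inl 0, 1) ∩ D0 :=
          ⟨(bookGraph_adj_hub _ 1).symm, by simp [hD0]⟩
        exact (Set.one_lt_ncard (Set.toFinite _)).2 ⟨_, h1, _, h2, by simp⟩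
    · fin_cases j
      · show 2 ≤ ((bookGraph n).neighborSet (Sum.inr a, 0) ∩ D0).ncard
        have h1 : ((Sum.inl 0 : Fin 1 ⊕ Fin n), (0 : Fin 2)) ∈
            (bookGraph n).neighborSet (Sum.inr a, 0) ∩ D0 :=
          ⟨bookGraph_adj_hub a 0, by simp [hD0]⟩
        have h2 : ((Sum.inr a : Fin 1 ⊕ Fin n), (1 : Fin 2)) ∈
            (bookGraph n).neighborSet (Sum.inr a, 0) ∩ D0 :=
          ⟨bookGraph_adj_page a, by simp [hD0]⟩
        exact (Set.one_lt_ncard (Set.toFinite _)).2 ⟨_, h1, _, h2, by simp⟩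
      · exact absurd (by simp [hD0]) hv
  have hmem : n + 1 ∈ {k | ∃ D : Set V, IsTwoDomSet (bookGraph n) D ∧ D.ncard = k} :=
    ⟨D0, hD0dom, hD0card⟩
  refine le_antisymm (Nat.sInf_le hmem) (le_csInf ⟨_, hmem⟩ ?_)
  rintro k ⟨D, hdom, rfl⟩
  -- every page contains a vertex of D
  have hpage : ∀ i : Fin n, (Sum.inr i, (0 : Fin 2)) ∈ D ∨ (Sum.inr i, (1 : Fin 2)) ∈ D := by
    intro i
    by_contra h
    push_neg at h
    have h2 := hdom _ h.1
    have hsub : (bookGraph n).neighborSet (Sum.inr i, 0) ∩ D ⊆ {(Sum.inl 0, 0)} := by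
      rintro w ⟨hw, hwD⟩
      rcases bookGraph_outer_nbr i 0 hw with rfl | rfl
      · rfl
      · exact absurd hwD (by simpa using h.2)
    have := Set.ncard_le_ncard hsub (Set.finite_singleton _)
    rw [Set.ncard_singleton] at this
    omega
  by_cases hh : (Sum.inl 0, (0 : Fin 2)) ∈ D ∨ (Sum.inl 0, (1 : Fin 2)) ∈ D
  · -- a hub vertex is in D: project to the first coordinate
    have hsub : (Set.univ : Set (Fin 1 ⊕ Fin n)) ⊆ Prod.fst '' D := by
      rintro (a | a) -
      · have ha : a = 0 := Subsingleton.elim _ _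
        subst ha
        rcases hh with h | h
        · exact ⟨_, h, rfl⟩
        · exact ⟨_, h, rfl⟩
      · rcases hpage a with h | h
        · exact ⟨_, h, rfl⟩
        · exact ⟨_, h, rfl⟩
    have h1 : n + 1 ≤ (Prod.fst '' D).ncard := by
      have := Set.ncard_le_ncard hsub (Set.toFinite _)
      rwa [Set.ncard_univ, Nat.card_eq_fintype_card, Fintype.card_sum, Fintype.card_fin,
        Fintype.card_fin, Nat.add_comm] at this
    exact h1.trans (Set.ncard_image_le (Set.toFinite _))
  · -- no hub vertex is in D: all 2n outer vertices are in D
    push_neg at hh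
    have houter : ∀ (i : Fin n) (j : Fin 2), ((Sum.inr i : Fin 1 ⊕ Fin n), j) ∈ D := by
      intro i j
      by_contra hv
      have h2 := hdom _ hv
      have hsub : (bookGraph n).neighborSet (Sum.inr i, j) ∩ D ⊆ {(Sum.inr i, 1 - j)} := by
        rintro w ⟨hw, hwD⟩
        rcases bookGraph_outer_nbr i j hw with rfl | rfl
        · exfalso; fin_cases j
          · exact hh.1 hwD
          · exact hh.2 hwD
        · rfl
      have := Set.ncard_le_ncard hsub (Set.finite_singleton _)
      rw [Set.ncard_singleton] at this
      omega
    have hsub : Set.range (fun p : Fin n × Fin 2 => ((Sum.inr p.1 : Fin 1 ⊕ Fin n), p.2)) ⊆ D := by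
      rintro w ⟨p, rfl⟩
      exact houter p.1 p.2
    have hinj2 : Function.Injective
        (fun p : Fin n × Fin 2 => ((Sum.inr p.1 : Fin 1 ⊕ Fin n), p.2)) := by
      intro a b h
      simp only [Prod.mk.injEq, Sum.inr.injEq] at h
      exact Prod.ext h.1 h.2
    have := Set.ncard_le_ncard hsub (Set.toFinite _)
    rw [← Set.image_univ, Set.ncard_image_of_injective _ hinj2, Set.ncard_univ,
      Nat.card_eq_fintype_card, Fintype.card_prod, Fintype.card_fin, Fintype.card_fin] at this
    omega
end

section
/- For any graph G and any vertex v of G, st_{γ₂}(G) ≤ st_{γ₂}(G − v) + 1. -/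
open SimpleGraph

lemma isTwoDomSet_image {V W : Type*} {G : SimpleGraph V} {H : SimpleGraph W}
    (e : G ≃g H) {D : Set V} (hD : IsTwoDomSet G D) : IsTwoDomSet H (e '' D) := by
  intro w hw
  have hu : e.symm w ∉ D := fun h => hw ⟨_, h, e.apply_symm_apply w⟩
  have h2 := hD _ hu
  have himg : ⇑e '' (G.neighborSet (e.symm w) ∩ D) = H.neighborSet w ∩ ⇑e '' D := by
    ext x
    constructor
    · rintro ⟨y, ⟨hy1, hy2⟩, rfl⟩
      refine ⟨?_, ⟨y, hy2, rfl⟩⟩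
      have : H.Adj (e (e.symm w)) (e y) := e.map_adj_iff.mpr hy1
      simpa using this
    · rintro ⟨hx, y, hy, rfl⟩
      refine ⟨y, ⟨?_, hy⟩, rfl⟩
      have hadj : H.Adj (e (e.symm w)) (e y) := by simpa using hx
      exact e.map_adj_iff.mp hadj
  calc 2 ≤ (G.neighborSet (e.symm w) ∩ D).ncard := h2
    _ = (⇑e '' (G.neighborSet (e.symm w) ∩ D)).ncard :=
        (Set.ncard_image_of_injective _ e.injective).symm
    _ = (H.neighborSet w ∩ ⇑e '' D).ncard := by rw [himg]

lemma gamma2_iso {V W : Type*} {G : SimpleGraph V} {H : SimpleGraph W}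
    (e : G ≃g H) : gamma2 G = gamma2 H := by
  unfold gamma2
  congr 1
  ext k
  constructor
  · rintro ⟨D, hD, rfl⟩
    exact ⟨e '' D, isTwoDomSet_image e hD, Set.ncard_image_of_injective _ e.injective⟩
  · rintro ⟨D, hD, rfl⟩
    exact ⟨e.symm '' D, isTwoDomSet_image e.symm hD,
      Set.ncard_image_of_injective _ e.symm.injective⟩

lemma gamma2_isEmpty {W : Type*} [IsEmpty W] (H : SimpleGraph W) : gamma2 H = 0 := by
  have : (0 : ℕ) ∈ {k | ∃ D : Set W, IsTwoDomSet H D ∧ D.ncard = k} :=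
    ⟨∅, fun w _ => (IsEmpty.false w).elim, Set.ncard_empty W⟩
  exact Nat.sInf_eq_zero.mpr (Or.inl this)

lemma gamma2_ne_zero {V : Type*} [Fintype V] [Nonempty V] (G : SimpleGraph V) :
    gamma2 G ≠ 0 := by
  intro h
  rcases Nat.sInf_eq_zero.mp h with h0 | h0
  · obtain ⟨D, hD, hcard⟩ := h0
    have hDe : D = ∅ := (Set.ncard_eq_zero (Set.toFinite D)).mp hcard
    have := hD (Classical.arbitrary V) (by simp [hDe])
    simp [hDe] at this
  · exact absurd h0 (Set.nonempty_iff_ne_empty.mp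
      ⟨(Set.univ : Set V).ncard, Set.univ, fun w hw => (hw (Set.mem_univ w)).elim, rfl⟩)

lemma stSet_nonempty {V : Type*} [Fintype V] [Nonempty V] (G : SimpleGraph V) :
    {k | ∃ S : Set V, S.ncard = k ∧ gamma2 (G.induce Sᶜ) ≠ gamma2 G}.Nonempty := by
  refine ⟨(Set.univ : Set V).ncard, Set.univ, rfl, ?_⟩
  have hE : IsEmpty ↑((Set.univ : Set V)ᶜ) := ⟨fun x => x.2 (Set.mem_univ _)⟩
  rw [@gamma2_isEmpty _ hE]
  exact fun h => gamma2_ne_zero G h.symm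

/-- Deleting `v` and then `S'` is the same as deleting `insert v S'` at once. -/
def delIso {V : Type*} (G : SimpleGraph V) (v : V) (S' : Set ↑({v}ᶜ : Set V)) :
    (G.induce ((insert v (Subtype.val '' S'))ᶜ)) ≃g ((G.induce ({v}ᶜ)).induce S'ᶜ) where
  toFun x := ⟨⟨x.1, fun h => x.2 (by simp [Set.mem_singleton_iff.mp h])⟩,
    fun h => x.2 (Set.mem_insert_iff.mpr (Or.inr ⟨_, h, rfl⟩))⟩
  invFun y := ⟨y.1.1, by
    intro h
    rcases Set.mem_insert_iff.mp h with h | ⟨a, ha, hav⟩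
    · exact y.1.2 (by simp [h])
    · exact y.2 (by rwa [show a = y.1 from Subtype.ext hav] at ha)⟩
  left_inv x := rfl
  right_inv y := rfl
  map_rel_iff' := Iff.rfl

theorem stGamma2_vertex_delete {V : Type*} [Fintype V]
    (G : SimpleGraph V) (v : V) (hV : 2 ≤ Fintype.card V) :
    stGamma2 G ≤ stGamma2 (G.induce ({v}ᶜ)) + 1 := by
  classical
  by_cases hcase : gamma2 (G.induce ({v}ᶜ)) = gamma2 G
  · -- the stability set of G - v is nonempty; pick a minimum witness S'
    obtain ⟨w, hw⟩ := Fintype.exists_ne_of_one_lt_card (by omega) v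
    have hne : Nonempty ↑({v}ᶜ : Set V) := ⟨⟨w, hw⟩⟩
    have hmem := Nat.sInf_mem (stSet_nonempty (G.induce ({v}ᶜ)))
    obtain ⟨S', hScard, hSne⟩ := hmem
    set S : Set V := insert v (Subtype.val '' S') with hS
    have hvnot : v ∉ Subtype.val '' S' := by
      rintro ⟨a, _, hav⟩
      exact a.2 (by simp [hav])
    have hcard : S.ncard = S'.ncard + 1 := by
      rw [hS, Set.ncard_insert_of_notMem hvnot (Set.toFinite _),
        Set.ncard_image_of_injective _ Subtype.val_injective]
    have hiso := gamma2_iso (delIso G v S')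
    refine le_trans (Nat.sInf_le ⟨S, rfl, ?_⟩) ?_
    · rw [hiso, ← hcase]
      exact hSne
    · rw [hcard, hScard]
      rfl
  · -- removing just v changes gamma2
    have h1 : stGamma2 G ≤ 1 := Nat.sInf_le ⟨{v}, Set.ncard_singleton v, hcase⟩
    omega
end

section
/- Let G be a graph of order n with minimum degree δ(G) ≥ 3. Then γ₂(G) ≤ n/2. -/
open SimpleGraph

/-- The number of ordered crossing pairs counted from `B`: for each `a ∈ B`,
the neighbors of `a` outside `B`. -/
private def cutF {V : Type*} [Fintype V] [DecidableEq V] (G : SimpleGraph V)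
    [DecidableRel G.Adj] (B : Finset V) : ℕ :=
  ∑ a ∈ B, (G.neighborFinset a \ B).card

private lemma sdiff_card_eq_sum {V : Type*} [Fintype V] [DecidableEq V] (G : SimpleGraph V)
    [DecidableRel G.Adj] (B : Finset V) (a : V) :
    (G.neighborFinset a \ B).card = ∑ b ∈ Bᶜ, if G.Adj a b then 1 else 0 := by
  have h : G.neighborFinset a \ B = Bᶜ.filter (fun b => G.Adj a b) := by
    ext b; simp [and_comm]
  rw [h, Finset.card_filter]

private lemma cut_compl {V : Type*} [Fintype V] [DecidableEq V] (G : SimpleGraph V)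
    [DecidableRel G.Adj] (B : Finset V) : cutF G B = cutF G Bᶜ := by
  unfold cutF
  simp only [sdiff_card_eq_sum, compl_compl]
  rw [Finset.sum_comm]
  refine Finset.sum_congr rfl fun b _ => Finset.sum_congr rfl fun a _ => ?_
  simp [adj_comm]

private lemma cut_insert {V : Type*} [Fintype V] [DecidableEq V] (G : SimpleGraph V)
    [DecidableRel G.Adj] (A : Finset V) (v : V) (hv : v ∉ A) :
    cutF G (insert v A) + (G.neighborFinset v ∩ A).card
      = cutF G A + (G.neighborFinset v \ A).card := by
  unfold cutF
  rw [Finset.sum_insert hv]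
  have hvv : G.neighborFinset v \ insert v A = G.neighborFinset v \ A := by
    ext b; simp only [Finset.mem_sdiff, Finset.mem_insert, mem_neighborFinset]
    constructor
    · rintro ⟨h1, h2⟩; exact ⟨h1, fun h => h2 (Or.inr h)⟩
    · rintro ⟨h1, h2⟩; refine ⟨h1, ?_⟩
      rintro (rfl | h)
      · exact G.irrefl h1
      · exact h2 h
  rw [hvv]
  have hin : (G.neighborFinset v ∩ A).card = ∑ a ∈ A, if G.Adj a v then 1 else 0 := by
    have h : G.neighborFinset v ∩ A = A.filter (fun a => G.Adj a v) := by
      ext a; simp [and_comm, adj_comm]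
    rw [h, Finset.card_filter]
  have hterm : ∀ a ∈ A, (G.neighborFinset a \ insert v A).card + (if G.Adj a v then 1 else 0)
      = (G.neighborFinset a \ A).card := by
    intro a ha
    by_cases h : G.Adj a v
    · have he : G.neighborFinset a \ A = insert v (G.neighborFinset a \ insert v A) := by
        ext b
        simp only [Finset.mem_sdiff, Finset.mem_insert, mem_neighborFinset]
        constructor
        · rintro ⟨h1, h2⟩
          by_cases hb : b = v
          · exact Or.inl hb
          · exact Or.inr ⟨h1, fun hh => hh.elim hb h2⟩
        · rintro (rfl | ⟨h1, h2⟩)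
          · exact ⟨h, hv⟩
          · exact ⟨h1, fun hh => h2 (Or.inr hh)⟩
      rw [he, Finset.card_insert_of_notMem (by simp), if_pos h]
    · have he : G.neighborFinset a \ insert v A = G.neighborFinset a \ A := by
        ext b
        simp only [Finset.mem_sdiff, Finset.mem_insert, mem_neighborFinset]
        constructor
        · rintro ⟨h1, h2⟩; exact ⟨h1, fun hh => h2 (Or.inr hh)⟩
        · rintro ⟨h1, h2⟩
          refine ⟨h1, ?_⟩
          rintro (rfl | hh)
          · exact h h1
          · exact h2 hh
      rw [he, if_neg h]
      omega
  calc (G.neighborFinset v \ A).card + ∑ a ∈ A, (G.neighborFinset a \ insert v A).card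
        + (G.neighborFinset v ∩ A).card
      = (∑ a ∈ A, (G.neighborFinset a \ insert v A).card
          + ∑ a ∈ A, if G.Adj a v then 1 else 0) + (G.neighborFinset v \ A).card := by
        rw [hin]; ring
    _ = (∑ a ∈ A, ((G.neighborFinset a \ insert v A).card + if G.Adj a v then 1 else 0))
          + (G.neighborFinset v \ A).card := by rw [Finset.sum_add_distrib]
    _ = (∑ a ∈ A, (G.neighborFinset a \ A).card) + (G.neighborFinset v \ A).card := by
        rw [Finset.sum_congr rfl hterm]

theorem gamma2_le_half_card {V : Type*} [Fintype V] [Nonempty V]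
    (G : SimpleGraph V) [DecidableRel G.Adj] (hδ : 3 ≤ G.minDegree) :
    2 * gamma2 G ≤ Fintype.card V := by
  classical
  obtain ⟨A, -, hA⟩ := Finset.exists_max_image (Finset.univ : Finset (Finset V)) (cutF G)
    ⟨∅, Finset.mem_univ _⟩
  have hmax : ∀ C, cutF G C ≤ cutF G A := fun C => hA C (Finset.mem_univ _)
  have key : ∀ B : Finset V, (∀ C, cutF G C ≤ cutF G B) →
      ∀ v ∉ B, 2 ≤ (G.neighborFinset v ∩ B).card := by
    intro B hB v hv
    have h1 := cut_insert G B v hv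
    have h2 : cutF G (insert v B) ≤ cutF G B := hB _
    have hdeg : (G.neighborFinset v ∩ B).card + (G.neighborFinset v \ B).card = G.degree v := by
      rw [← card_neighborFinset_eq_degree]
      exact Finset.card_inter_add_card_sdiff _ _
    have h3 := G.minDegree_le_degree v
    omega
  have hmaxc : ∀ C, cutF G C ≤ cutF G Aᶜ := fun C => by
    rw [← cut_compl]; exact hmax C
  have hdomA : IsTwoDomSet G ↑A := by
    intro v hv
    have h := key A hmax v (by simpa using hv)
    have e : G.neighborSet v ∩ ↑A = ↑(G.neighborFinset v ∩ A) := by ext b; simp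
    rw [e, Set.ncard_coe_finset]
    exact h
  have hdomAc : IsTwoDomSet G ↑(Aᶜ : Finset V) := by
    intro v hv
    have h := key Aᶜ hmaxc v (by simpa using hv)
    have e : G.neighborSet v ∩ ↑(Aᶜ : Finset V) = ↑(G.neighborFinset v ∩ Aᶜ) := by ext b; simp
    rw [e, Set.ncard_coe_finset]
    exact h
  have g1 : gamma2 G ≤ A.card := Nat.sInf_le ⟨↑A, hdomA, Set.ncard_coe_finset _⟩
  have g2 : gamma2 G ≤ (Aᶜ : Finset V).card := Nat.sInf_le ⟨_, hdomAc, Set.ncard_coe_finset _⟩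
  have hc := Finset.card_add_card_compl A
  omega
end

section
/- Let G be a graph of order n with γ₂(G) ≥ 2. Then st_{γ₂}(G) ≤ n − γ₂(G) + 1. -/
open SimpleGraph

theorem stGamma2_le_card_sub_gamma2 {V : Type*} [Fintype V]
    (G : SimpleGraph V) (h : 2 ≤ gamma2 G) :
    stGamma2 G ≤ Fintype.card V - gamma2 G + 1 := by
  have hne : {k | ∃ D : Set V, IsTwoDomSet G D ∧ D.ncard = k}.Nonempty :=
    ⟨(Set.univ : Set V).ncard, Set.univ, fun v hv => absurd (Set.mem_univ v) hv, rfl⟩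
  obtain ⟨D, hD, hDcard⟩ : gamma2 G ∈ {k | ∃ D : Set V, IsTwoDomSet G D ∧ D.ncard = k} :=
    Nat.sInf_mem hne
  have hDne : D.Nonempty := by
    rw [← Set.ncard_pos, hDcard]; omega
  obtain ⟨v, hv⟩ := hDne
  set S : Set V := insert v Dᶜ with hS
  have hScompl : Sᶜ = D \ {v} := by
    rw [hS]; ext x
    simp [Set.mem_compl_iff]; tauto
  have hScard : S.ncard = Fintype.card V - gamma2 G + 1 := by
    rw [hS, Set.ncard_insert_of_notMem (by simpa using hv)]
    have := Set.ncard_add_ncard_compl D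
    rw [Nat.card_eq_fintype_card] at this
    omega
  have hcompcard : Sᶜ.ncard = gamma2 G - 1 := by
    rw [hScompl, Set.ncard_diff_singleton_of_mem hv, hDcard]
  -- gamma2 of induced graph is at most |Sᶜ|
  have hle : gamma2 (G.induce Sᶜ) ≤ Sᶜ.ncard := by
    apply Nat.sInf_le
    refine ⟨Set.univ, fun w hw => absurd (Set.mem_univ w) hw, ?_⟩
    rw [Set.ncard_univ, Nat.card_coe_set_eq]
  have hne2 : gamma2 (G.induce Sᶜ) ≠ gamma2 G := by
    rw [hcompcard] at hle
    omega
  calc stGamma2 G ≤ S.ncard := Nat.sInf_le ⟨S, rfl, hne2⟩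
    _ = _ := hScard
end

section
/- Let G be a graph of order n ≥ 2 with γ₂(G) ≥ 2 and γ₂(complement of G) ≥ 2. Then st_{γ₂}(G) + st_{γ₂}(Ḡ) ≤ 2n − 2. -/
open SimpleGraph

lemma gamma2_of_unique {W : Type*} [Unique W] (G : SimpleGraph W) : gamma2 G = 1 := by
  have h1 : (1 : ℕ) ∈ {k | ∃ D : Set W, IsTwoDomSet G D ∧ D.ncard = k} := by
    refine ⟨Set.univ, fun v hv => absurd (Set.mem_univ v) hv, ?_⟩
    rw [Set.ncard_univ, Nat.card_unique]
  have h0 : (0 : ℕ) ∉ {k | ∃ D : Set W, IsTwoDomSet G D ∧ D.ncard = k} := by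
    rintro ⟨D, hD, hcard⟩
    have hfin : D.Finite := Set.toFinite D
    have hD0 : D = ∅ := (Set.ncard_eq_zero hfin).mp hcard
    have := hD default (by simp [hD0])
    simp [hD0] at this
  have hle : gamma2 G ≤ 1 := Nat.sInf_le h1
  have hmem := Nat.sInf_mem ⟨1, h1⟩
  have hne : gamma2 G ≠ 0 := fun h => h0 (h ▸ hmem)
  omega

lemma stGamma2_le {V : Type*} [Fintype V] (G : SimpleGraph V)
    (hV : 1 ≤ Fintype.card V) (hG : 2 ≤ gamma2 G) :
    stGamma2 G ≤ Fintype.card V - 1 := by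
  have : Nonempty V := Fintype.card_pos_iff.mp hV
  obtain ⟨v⟩ := this
  apply Nat.sInf_le
  refine ⟨({v} : Set V)ᶜ, ?_, ?_⟩
  · classical
    rw [Set.ncard_eq_toFinset_card', Set.toFinset_compl, Finset.card_compl]
    simp
  · rw [compl_compl]
    have : gamma2 (G.induce ({v} : Set V)) = 1 := gamma2_of_unique _
    omega

theorem stGamma2_add_stGamma2_compl {V : Type*} [Fintype V]
    (G : SimpleGraph V) (hV : 2 ≤ Fintype.card V)
    (hG : 2 ≤ gamma2 G) (hG' : 2 ≤ gamma2 Gᶜ) :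
    stGamma2 G + stGamma2 Gᶜ ≤ 2 * Fintype.card V - 2 := by
  have h1 := stGamma2_le G (by omega) hG
  have h2 := stGamma2_le Gᶜ (by omega) hG'
  omega
end
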